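/- Under the assumptions of the previous construction (X has conditionally independent components below the threshold γ, agrees with the comonotone vector Y above it, and each Xᵢ ≤ F⁻¹_{μᵢ}(γ) a.s. on {U ≤ γ}), for every a ∈ ℝ with a ≥ q(γ) := f(F⁻¹_{μ₁}(γ),…,F⁻¹_{μₙ}(γ)) we have P(f(Y) ≤ a) = P(f(X) ≤ a), where Yᵢ = F⁻¹_{μᵢ}(U). -/

import Mathlib

open MeasureTheory

/-- Left-continuous quantile function `F⁻¹_μ(u) = inf {a : F_μ(a) ≥ u}`. -/
noncomputable def qf (μ : Measure ℝ) (u : ℝ) : ℝ :=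
  sInf {a : ℝ | u ≤ (μ (Set.Iic a)).toReal}

/-! On `{U > γ}` the two vectors coincide. On `{U ≤ γ}` both lie almost surely below the
threshold vector `(F⁻¹_{μᵢ}(γ))ᵢ`: `X` by hypothesis, `Y` because the quantile function is
monotone on `(0, 1)` (for `u ≤ 0` it is `sInf ℝ = 0`, a junk value) and `U > 0`
almost surely. There `f` of either vector is at most
`q(γ) ≤ a` by monotonicity, so the two events `{f ≤ a}` agree almost surely. -/

open ProbabilityTheory Filter Set

lemma qf_eq_sInf_cdf (μ : Measure ℝ) [IsProbabilityMeasure μ] (u : ℝ) :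
    qf μ u = sInf {a | u ≤ cdf μ a} := by
  simp only [qf, cdf_eq_real, measureReal_def]

lemma nonempty_setOf_le_cdf (μ : Measure ℝ) [IsProbabilityMeasure μ] {v : ℝ} (hv : v < 1) :
    {a | v ≤ cdf μ a}.Nonempty :=
  ((tendsto_cdf_atTop μ).eventually (eventually_ge_nhds hv)).exists

lemma bddBelow_setOf_le_cdf (μ : Measure ℝ) [IsProbabilityMeasure μ] {u : ℝ} (hu : 0 < u) :
    BddBelow {a | u ≤ cdf μ a} := by
  obtain ⟨b, hb⟩ := ((tendsto_cdf_atBot μ).eventually_lt_const hu).exists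
  refine ⟨b, fun x hx => le_of_not_gt fun hxb => ?_⟩
  exact (hb.trans_le' (monotone_cdf μ hxb.le)).not_ge hx

lemma qf_monotoneOn (μ : Measure ℝ) [IsProbabilityMeasure μ] : MonotoneOn (qf μ) (Ioo 0 1) := by
  intro u hu v hv huv
  rw [qf_eq_sInf_cdf, qf_eq_sInf_cdf]
  exact csInf_le_csInf (bddBelow_setOf_le_cdf μ hu.1) (nonempty_setOf_le_cdf μ hv.2)
    fun x hx => huv.trans hx

lemma ae_pos_of_map_eq_uniform {Ω : Type*} [MeasurableSpace Ω] {P : Measure Ω} {U : Ω → ℝ}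
    (hU : Measurable U) (hUunif : P.map U = volume.restrict (Ioo 0 1)) :
    ∀ᵐ ω ∂P, 0 < U ω := by
  refine ae_of_ae_map hU.aemeasurable ?_
  rw [hUunif]
  exact ae_restrict_of_forall_mem measurableSet_Ioo fun _ hy => hy.1

lemma Monotone.le_iff_le_of_eq_or_le {α β : Type*} [Preorder α] [Preorder β] {f : α → β}
    (hf : Monotone f) {x y c : α} {a : β} (hc : f c ≤ a) (h : x = y ∨ x ≤ c ∧ y ≤ c) :
    f x ≤ a ↔ f y ≤ a := by
  rcases h with rfl | ⟨hx, hy⟩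
  · rfl
  · exact iff_of_true ((hf hx).trans hc) ((hf hy).trans hc)

theorem cdf_agree_above_threshold_general {Ω : Type*} [MeasurableSpace Ω] (P : Measure Ω)
    (n : ℕ) (U : Ω → ℝ) (hU : Measurable U)
    (hUunif : P.map U = volume.restrict (Set.Ioo (0 : ℝ) 1))
    (γ : ℝ) (hγ : γ ∈ Set.Ioo (0 : ℝ) 1)
    (μ : Fin n → ProbabilityMeasure ℝ) (X : Fin n → Ω → ℝ)
    (h0 : ∀ i, P ({ω | qf (μ i).toMeasure γ < X i ω} ∩ {ω | U ω ≤ γ}) = 0)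
    (hagree : ∀ i ω, γ < U ω → X i ω = qf (μ i).toMeasure (U ω))
    (f : (Fin n → ℝ) → ℝ) (hf : Monotone f)
    (a : ℝ) (ha : f (fun i => qf (μ i).toMeasure γ) ≤ a) :
    P {ω | f (fun i => qf (μ i).toMeasure (U ω)) ≤ a}
      = P {ω | f (fun i => X i ω) ≤ a} := by
  have hX_le : ∀ᵐ ω ∂P, ∀ i, U ω ≤ γ → X i ω ≤ qf (μ i).toMeasure γ := by
    refine ae_all_iff.2 fun i => ?_
    filter_upwards [measure_eq_zero_iff_ae_notMem.1 (h0 i)] with ω hω hUγ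
    exact le_of_not_gt fun hlt => hω ⟨hlt, hUγ⟩
  refine measure_congr ?_
  filter_upwards [ae_pos_of_map_eq_uniform hU hUunif, hX_le] with ω hUpos hω
  refine propext (hf.le_iff_le_of_eq_or_le ha ?_)
  rcases lt_or_ge γ (U ω) with hγU | hUγ
  · exact Or.inl (funext fun i => (hagree i ω hγU).symm)
  · exact Or.inr ⟨fun i => qf_monotoneOn _ ⟨hUpos, hUγ.trans_lt hγ.2⟩ hγ hUγ, fun i => hω i hUγ⟩

/-- Under the upper-comonotone construction (components bounded by `F⁻¹_{μᵢ}(γ)` a.s. on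
`{U ≤ γ}` and agreeing with the comonotone vector `Y` on `{U > γ}`), for every
`a ≥ q(γ)` the distribution functions of `f(X)` and `f(Y)` agree:
`P(f(Y) ≤ a) = P(f(X) ≤ a)`. -/
theorem cdf_agree_above_threshold {Ω : Type*} [MeasurableSpace Ω] (P : Measure Ω)
    [IsProbabilityMeasure P]
    (n : ℕ) (U : Ω → ℝ) (hU : Measurable U)
    (hUunif : P.map U = volume.restrict (Set.Ioo (0 : ℝ) 1))
    (γ : ℝ) (hγ : γ ∈ Set.Ioo (0 : ℝ) 1)
    (μ : Fin n → ProbabilityMeasure ℝ) (X : Fin n → Ω → ℝ)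
    (hXm : ∀ i, Measurable (X i))
    (hXd : ∀ i, P.map (X i) = (μ i).toMeasure)
    (hindep : ProbabilityTheory.iIndepFun X
      ((ENNReal.ofReal γ)⁻¹ • P.restrict {ω | U ω ≤ γ}))
    (h0 : ∀ i, P ({ω | qf (μ i).toMeasure γ < X i ω} ∩ {ω | U ω ≤ γ}) = 0)
    (hagree : ∀ i ω, γ < U ω → X i ω = qf (μ i).toMeasure (U ω))
    (f : (Fin n → ℝ) → ℝ) (hf : Monotone f)
    (hlc : ∀ x : Fin n → ℝ,
      Filter.Tendsto f (nhdsWithin x {y | ∀ i, y i < x i}) (nhds (f x)))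
    (a : ℝ) (ha : f (fun i => qf (μ i).toMeasure γ) ≤ a) :
    P {ω | f (fun i => qf (μ i).toMeasure (U ω)) ≤ a}
      = P {ω | f (fun i => X i ω) ≤ a} :=
  cdf_agree_above_threshold_general P n U hU hUunif γ hγ μ X h0 hagree f hf a ha
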